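/- Let K be a compact space, φ : K → K a continuous transformation, H a complex Hilbert space, and S : f ↦ f ∘ φ the Koopman operator on the Banach space C(K,H) of continuous H-valued functions on K with the sup norm. Let U(H) denote the unitary operators on H and Λ the set of continuous maps γ : K → U(H), and for γ ∈ Λ define (γS)f(x) = γ(x)·(Sf)(x) = γ(x)·f(φ(x)) and the representation 𝒮_γ = {(γS)^n : n ∈ ℕ} of (ℕ,+) on C(K,H). Then {((1/N) ∑_{n=0}^{N−1} (γS)^n)_{N∈ℕ} : γ ∈ Λ} is a uniform family of ergodic nets. -/
import Mathlib


open Filter Topology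

noncomputable section

/-- A uniform family `{(A_α^{𝒮_i})_{α ∈ ι} : i ∈ I}` of **right** ergodic nets
(Definition 2.1): (1) each `A_α^{𝒮_i}` can be approximated, uniformly in `i` and on
finitely many vectors, by convex combinations `∑_j c_{i,j} S_{i,g_j}` with the *same*
`g_1, …, g_N` for all `i`; (2) `limsup_α sup_i ‖A_α^{𝒮_i} x - A_α^{𝒮_i} S_{i,g} x‖ = 0`. -/
def UniformFamilyRightErgodic {I G ι X : Type} [Preorder ι]
    [NormedAddCommGroup X] [NormedSpace ℂ X]
    (S : I → G → (X →L[ℂ] X)) (A : I → ι → (X →L[ℂ] X)) : Prop :=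
  (∀ (α : ι) (ε : ℝ), 0 < ε → ∀ (m : ℕ) (xs : Fin m → X),
      ∃ (N : ℕ) (g : Fin N → G) (c : I → Fin N → ℝ),
        (∀ i j, 0 ≤ c i j) ∧ (∀ i, ∑ j, c i j = 1) ∧
        ∀ (i : I) (k : Fin m),
          ‖A i α (xs k) - ∑ j, c i j • S i (g j) (xs k)‖ < ε) ∧
  (∀ (g : G) (x : X),
      Tendsto (fun α : ι => ⨆ i : I, ‖A i α x - A i α (S i g x)‖) atTop (nhds 0))

/-- A uniform family of ergodic nets: a uniform family of right ergodic nets which in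
addition satisfies `limsup_α sup_i ‖A_α^{𝒮_i} x - S_{i,g} A_α^{𝒮_i} x‖ = 0`. -/
def UniformFamilyErgodic {I G ι X : Type} [Preorder ι]
    [NormedAddCommGroup X] [NormedSpace ℂ X]
    (S : I → G → (X →L[ℂ] X)) (A : I → ι → (X →L[ℂ] X)) : Prop :=
  UniformFamilyRightErgodic S A ∧
  ∀ (g : G) (x : X),
    Tendsto (fun α : ι => ⨆ i : I, ‖A i α x - S i g (A i α x)‖) atTop (nhds 0)


section Aux

variable {X : Type} [NormedAddCommGroup X] [NormedSpace ℂ X]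

lemma pow_norm_le (T : X →L[ℂ] X) (hT : ∀ x, ‖T x‖ ≤ ‖x‖) (n : ℕ) :
    ∀ x : X, ‖(T ^ n) x‖ ≤ ‖x‖ := by
  induction n with
  | zero => intro x; simp
  | succ n ih =>
    intro x
    rw [pow_succ, ContinuousLinearMap.mul_apply]
    exact (ih (T x)).trans (hT x)

lemma cesaro_step (T : X →L[ℂ] X) (hT : ∀ x, ‖T x‖ ≤ ‖x‖) (N : ℕ+) (x : X) :
    ‖(((N : ℕ) : ℂ)⁻¹ • ∑ n ∈ Finset.range (N : ℕ), T ^ n) x -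
      (((N : ℕ) : ℂ)⁻¹ • ∑ n ∈ Finset.range (N : ℕ), T ^ n) (T x)‖ ≤ 2 * ‖x‖ / N := by
  have h1 : (((N : ℕ) : ℂ)⁻¹ • ∑ n ∈ Finset.range (N : ℕ), T ^ n) x -
      (((N : ℕ) : ℂ)⁻¹ • ∑ n ∈ Finset.range (N : ℕ), T ^ n) (T x)
      = ((N : ℕ) : ℂ)⁻¹ • (x - (T ^ (N : ℕ)) x) := by
    simp only [ContinuousLinearMap.smul_apply, ContinuousLinearMap.sum_apply, ← smul_sub,
      ← Finset.sum_sub_distrib]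
    congr 1
    have : ∀ n ∈ Finset.range (N : ℕ),
        (T ^ n) x - (T ^ n) (T x) = (fun k => (T ^ k) x) n - (fun k => (T ^ k) x) (n + 1) := by
      intro n _
      simp [pow_succ, ContinuousLinearMap.mul_apply]
    rw [Finset.sum_congr rfl this, Finset.sum_range_sub' (fun k => (T ^ k) x) (N : ℕ)]
    simp
  rw [h1, norm_smul]
  have h2 : ‖((N : ℕ) : ℂ)⁻¹‖ = ((N : ℕ) : ℝ)⁻¹ := by
    rw [norm_inv, Complex.norm_natCast]
  rw [h2]
  have h3 : ‖x - (T ^ (N : ℕ)) x‖ ≤ 2 * ‖x‖ := by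
    calc ‖x - (T ^ (N : ℕ)) x‖ ≤ ‖x‖ + ‖(T ^ (N : ℕ)) x‖ := norm_sub_le _ _
      _ ≤ ‖x‖ + ‖x‖ := by gcongr; exact pow_norm_le T hT _ x
      _ = 2 * ‖x‖ := by ring
  have hN : (0:ℝ) < (N : ℕ) := by exact_mod_cast N.pos
  rw [div_eq_inv_mul]
  gcongr

lemma cesaro_key (T : X →L[ℂ] X) (hT : ∀ x, ‖T x‖ ≤ ‖x‖) (N : ℕ+) (m : ℕ) :
    ∀ x : X, ‖(((N : ℕ) : ℂ)⁻¹ • ∑ n ∈ Finset.range (N : ℕ), T ^ n) x -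
      (((N : ℕ) : ℂ)⁻¹ • ∑ n ∈ Finset.range (N : ℕ), T ^ n) ((T ^ m) x)‖
      ≤ m * (2 * ‖x‖) / N := by
  induction m with
  | zero => intro x; simp
  | succ m ih =>
    intro x
    set A := (((N : ℕ) : ℂ)⁻¹ • ∑ n ∈ Finset.range (N : ℕ), T ^ n) with hA
    have h2 : (T ^ (m + 1)) x = (T ^ m) (T x) := by
      rw [pow_succ, ContinuousLinearMap.mul_apply]
    calc ‖A x - A ((T ^ (m+1)) x)‖
        ≤ ‖A x - A (T x)‖ + ‖A (T x) - A ((T ^ m) (T x))‖ := by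
          rw [h2]; exact norm_sub_le_norm_sub_add_norm_sub _ _ _
      _ ≤ 2 * ‖x‖ / N + m * (2 * ‖T x‖) / N := by
          gcongr
          · exact cesaro_step T hT N x
          · exact ih (T x)
      _ ≤ 2 * ‖x‖ / N + m * (2 * ‖x‖) / N := by gcongr; exact hT x
      _ = (m + 1 : ℕ) * (2 * ‖x‖) / N := by push_cast; ring

lemma tendsto_aux (C : ℝ) (f : ℕ+ → ℝ) (h0 : ∀ N, 0 ≤ f N)
    (hle : ∀ N : ℕ+, f N ≤ C / N) : Tendsto f atTop (nhds 0) := by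
  have hcoe : Tendsto (fun N : ℕ+ => (N : ℕ)) atTop atTop := by
    rw [tendsto_atTop_atTop]
    intro b
    exact ⟨⟨b + 1, Nat.succ_pos b⟩, fun a ha => le_trans (Nat.le_succ b) (by exact_mod_cast ha)⟩
  have : Tendsto (fun N : ℕ+ => C / ((N : ℕ) : ℝ)) atTop (nhds 0) :=
    (tendsto_const_div_atTop_nhds_zero_nat C).comp hcoe
  exact squeeze_zero h0 hle this

end Aux

variable {K H : Type} [TopologicalSpace K] [CompactSpace K]
  [NormedAddCommGroup H] [InnerProductSpace ℂ H] [CompleteSpace H]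

/-- The operator `γ S` on `C(K,H)`: `(γS) f (x) = γ(x) (f (φ x))`, where `S` is the
Koopman operator of `φ` and `γ : K → L(H)` is continuous. -/
def twistedKoopman (φ : C(K, K)) (γ : C(K, H →L[ℂ] H)) : C(K, H) →L[ℂ] C(K, H) :=
  LinearMap.mkContinuous
    { toFun := fun f : C(K, H) =>
        ContinuousMap.mk (fun x : K => γ x (f (φ x)))
          (γ.continuous.clm_apply (f.continuous.comp φ.continuous))
      map_add' := fun f g => by ext x; simp
      map_smul' := fun c f => by ext x; simp }
    ‖γ‖
    (fun f => by
      refine (ContinuousMap.norm_le _ (mul_nonneg (norm_nonneg _) (norm_nonneg _))).2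
        fun x => ?_
      calc ‖γ x (f (φ x))‖ ≤ ‖γ x‖ * ‖f (φ x)‖ := (γ x).le_opNorm _
        _ ≤ ‖γ‖ * ‖f‖ := mul_le_mul (γ.norm_coe_le_norm x)
            (f.norm_coe_le_norm _) (norm_nonneg _) (norm_nonneg _))

/-- Proposition 2.2 (c). Let `K` be compact, `φ : K → K` continuous,
`H` a complex Hilbert space, and for each continuous `γ : K → U(H)` (unitary-valued) let
`γS` be the twisted Koopman operator on `C(K,H)`.  The Cesàro means
`(1/N) ∑_{n=0}^{N-1} (γS)^n`, `N ≥ 1`, form a uniform family of ergodic nets. -/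
theorem twistedKoopman_cesaro_uniformFamilyErgodic (φ : C(K, K)) :
    UniformFamilyErgodic
      (fun (γ : {γ : C(K, H →L[ℂ] H) //
          ∀ x : K, (∀ v : H, ‖γ x v‖ = ‖v‖) ∧ Function.Surjective (γ x)})
        (n : ℕ) => (twistedKoopman φ γ.1) ^ n)
      (fun (γ : {γ : C(K, H →L[ℂ] H) //
          ∀ x : K, (∀ v : H, ‖γ x v‖ = ‖v‖) ∧ Function.Surjective (γ x)})
        (N : ℕ+) =>
        ((N : ℕ) : ℂ)⁻¹ • ∑ n ∈ Finset.range (N : ℕ), (twistedKoopman φ γ.1) ^ n) := by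
  set Γ := {γ : C(K, H →L[ℂ] H) //
      ∀ x : K, (∀ v : H, ‖γ x v‖ = ‖v‖) ∧ Function.Surjective (γ x)} with hΓ
  have hne : Nonempty Γ :=
    ⟨⟨ContinuousMap.const K (1 : H →L[ℂ] H), fun x =>
      ⟨fun v => rfl, fun v => ⟨v, rfl⟩⟩⟩⟩
  -- the twisted Koopman operators are contractions
  have hcontr : ∀ γ : Γ, ∀ f : C(K, H), ‖twistedKoopman φ γ.1 f‖ ≤ ‖f‖ := by
    intro γ f
    refine (ContinuousMap.norm_le _ (norm_nonneg f)).2 fun x => ?_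
    have : twistedKoopman φ γ.1 f x = γ.1 x (f (φ x)) := rfl
    rw [this, (γ.2 x).1]
    exact f.norm_coe_le_norm _
  -- the uniform bound on means minus shifted means
  have hbound : ∀ (γ : Γ) (N : ℕ+) (m : ℕ) (x : C(K, H)),
      ‖(((N : ℕ) : ℂ)⁻¹ • ∑ n ∈ Finset.range (N : ℕ), (twistedKoopman φ γ.1) ^ n) x -
        (((N : ℕ) : ℂ)⁻¹ • ∑ n ∈ Finset.range (N : ℕ), (twistedKoopman φ γ.1) ^ n)
          (((twistedKoopman φ γ.1) ^ m) x)‖ ≤ m * (2 * ‖x‖) / N :=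
    fun γ N m x => cesaro_key (twistedKoopman φ γ.1) (hcontr γ) N m x
  -- the means commute with powers
  have hcomm : ∀ (γ : Γ) (N : ℕ+) (m : ℕ) (x : C(K, H)),
      ((twistedKoopman φ γ.1) ^ m)
          ((((N : ℕ) : ℂ)⁻¹ • ∑ n ∈ Finset.range (N : ℕ), (twistedKoopman φ γ.1) ^ n) x)
      = (((N : ℕ) : ℂ)⁻¹ • ∑ n ∈ Finset.range (N : ℕ), (twistedKoopman φ γ.1) ^ n)
          (((twistedKoopman φ γ.1) ^ m) x) := by
    intro γ N m x
    set T := twistedKoopman φ γ.1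
    simp only [ContinuousLinearMap.smul_apply, ContinuousLinearMap.sum_apply, map_smul,
      map_sum]
    congr 1
    refine Finset.sum_congr rfl fun n _ => ?_
    rw [← ContinuousLinearMap.mul_apply, ← ContinuousLinearMap.mul_apply, pow_mul_comm]
  have tendsto_part : ∀ (m : ℕ) (x : C(K, H)),
      Tendsto (fun N : ℕ+ => ⨆ γ : Γ,
        ‖(((N : ℕ) : ℂ)⁻¹ • ∑ n ∈ Finset.range (N : ℕ), (twistedKoopman φ γ.1) ^ n) x -
          (((N : ℕ) : ℂ)⁻¹ • ∑ n ∈ Finset.range (N : ℕ), (twistedKoopman φ γ.1) ^ n)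
            (((twistedKoopman φ γ.1) ^ m) x)‖) atTop (nhds 0) := by
    intro m x
    refine tendsto_aux (m * (2 * ‖x‖)) _ (fun N => ?_) (fun N => ?_)
    · exact Real.iSup_nonneg fun γ => norm_nonneg _
    · exact ciSup_le fun γ => hbound γ N m x
  constructor
  · constructor
    · -- convex combinations
      intro α ε hε m xs
      refine ⟨(α : ℕ), fun j => (j : ℕ), fun _ _ => ((α : ℕ) : ℝ)⁻¹, ?_, ?_, ?_⟩
      · intro i j
        positivity
      · intro i
        rw [Finset.sum_const, Finset.card_univ, Fintype.card_fin, nsmul_eq_mul]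
        rw [mul_inv_cancel₀]
        exact_mod_cast α.pos.ne'
      · intro γ k
        have key : (((α : ℕ) : ℂ)⁻¹ • ∑ n ∈ Finset.range (α : ℕ),
              (twistedKoopman φ γ.1) ^ n) (xs k)
            = ∑ j : Fin (α : ℕ), ((α : ℕ) : ℝ)⁻¹ •
                (((twistedKoopman φ γ.1) ^ (j : ℕ)) (xs k)) := by
          rw [ContinuousLinearMap.smul_apply, ContinuousLinearMap.sum_apply,
            ← Fin.sum_univ_eq_sum_range (fun n => ((twistedKoopman φ γ.1) ^ n) (xs k)),
            Finset.smul_sum]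
          refine Finset.sum_congr rfl fun j _ => ?_
          rw [← Complex.coe_smul, Complex.ofReal_inv, Complex.ofReal_natCast]
        rw [key, sub_self, norm_zero]
        exact hε
    · -- right ergodicity
      intro m x
      exact tendsto_part m x
  · -- left ergodicity
    intro m x
    refine (tendsto_part m x).congr fun N => ?_
    exact iSup_congr fun γ => by rw [hcomm γ N m x]
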